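/- Let s > 0, p ≥ 1, and let f : ℝ^n → ℝ be measurable with f ∈ L^{q₀}(μ_s) for some q₀ > p. Then there exists q > p such that for every T < ∞: sup_{0 ≤ t ≤ T} ‖e^{−tE} f‖_{L^q(μ_s)} < ∞. In particular, if f ∈ L^{q₀}(μ_s) for some q₀ > 1, then the family {e^{−tE} f : 0 ≤ t ≤ T} is uniformly integrable with respect to μ_s. -/

import Mathlib

open MeasureTheory Real
open scoped ENNReal NNReal

/-- The Gaussian heat kernel `ρ_s(x) = (πs)^(−n/2) exp(−‖x‖²/s)` of `e^{sΔ/4}` on `ℝ^n`. -/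
noncomputable def heatK (n : ℕ) (s : ℝ) (x : EuclideanSpace ℝ (Fin n)) : ℝ :=
  (Real.pi * s) ^ (-(n : ℝ) / 2) * Real.exp (-‖x‖ ^ 2 / s)

/-- The heat kernel probability measure `μ_s = ρ_s dx` on `ℝ^n`. -/
noncomputable def gm (n : ℕ) (s : ℝ) : Measure (EuclideanSpace ℝ (Fin n)) :=
  volume.withDensity fun x => ENNReal.ofReal (heatK n s x)

/-- The dilation semigroup `(e^{−tE} f)(x) = f(e^{−t} x)`. -/
noncomputable def dil {n : ℕ} (t : ℝ) (f : EuclideanSpace ℝ (Fin n) → ℝ)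
    (x : EuclideanSpace ℝ (Fin n)) : ℝ :=
  f (Real.exp (-t) • x)

lemma heatK_measurable (n : ℕ) (s : ℝ) : Measurable (heatK n s) := by
  unfold heatK
  exact (measurable_const.mul (((measurable_norm.pow_const 2).neg.div_const s).exp))

lemma heatK_nonneg (n : ℕ) {s : ℝ} (hs : 0 < s) (x : EuclideanSpace ℝ (Fin n)) :
    0 ≤ heatK n s x := by
  unfold heatK
  positivity

/-- `ρ_s(e^t • y) ≤ ρ_s(y)` for `t ≥ 0`. -/
lemma heatK_smul_le (n : ℕ) {s : ℝ} (hs : 0 < s) {t : ℝ} (ht : 0 ≤ t)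
    (y : EuclideanSpace ℝ (Fin n)) : heatK n s (Real.exp t • y) ≤ heatK n s y := by
  unfold heatK
  have h1 : ‖y‖ ≤ ‖Real.exp t • y‖ := by
    rw [norm_smul, Real.norm_eq_abs, abs_of_pos (Real.exp_pos t)]
    nlinarith [Real.one_le_exp ht, norm_nonneg y]
  have h2 : ‖y‖ ^ 2 ≤ ‖Real.exp t • y‖ ^ 2 :=
    pow_le_pow_left₀ (norm_nonneg y) h1 2
  have h3 : Real.exp (-‖Real.exp t • y‖ ^ 2 / s) ≤ Real.exp (-‖y‖ ^ 2 / s) := by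
    apply Real.exp_le_exp.2
    rw [div_eq_mul_inv, div_eq_mul_inv]
    exact mul_le_mul_of_nonneg_right (by linarith) (by positivity)
  have h4 : (0 : ℝ) ≤ (Real.pi * s) ^ (-(n : ℝ) / 2) := by
    apply Real.rpow_nonneg
    positivity
  exact mul_le_mul_of_nonneg_left h3 h4

/-- Key change-of-variables estimate for the dilated function. -/
lemma dil_lintegral_le {n : ℕ} {s : ℝ} (hs : 0 < s) {q : ℝ}
    (f : EuclideanSpace ℝ (Fin n) → ℝ) (hfmeas : Measurable f)
    {t T : ℝ} (ht : t ∈ Set.Icc (0 : ℝ) T) :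
    ∫⁻ x, (ENNReal.ofReal |dil t f x|) ^ q ∂(gm n s)
      ≤ ENNReal.ofReal (Real.exp (n * T)) *
        ∫⁻ x, (ENNReal.ofReal |f x|) ^ q ∂(gm n s) := by
  obtain ⟨ht0, htT⟩ := ht
  set c := Real.exp (-t) with hc
  have hcpos : 0 < c := Real.exp_pos _
  set G : EuclideanSpace ℝ (Fin n) → ℝ≥0∞ := fun y => (ENNReal.ofReal |f y|) ^ q with hG
  have hGmeas : Measurable G :=
    (ENNReal.continuous_rpow_const.measurable).comp hfmeas.abs.ennreal_ofReal
  have hρmeas : Measurable fun x => ENNReal.ofReal (heatK n s x) :=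
    (heatK_measurable n s).ennreal_ofReal
  set H : EuclideanSpace ℝ (Fin n) → ℝ≥0∞ :=
    fun y => ENNReal.ofReal (heatK n s (Real.exp t • y)) * G y with hH
  have hHmeas : Measurable H := by
    apply Measurable.mul _ hGmeas
    exact ((heatK_measurable n s).comp (measurable_const_smul _)).ennreal_ofReal
  have hsmul : ∀ x : EuclideanSpace ℝ (Fin n), Real.exp t • c • x = x := by
    intro x
    rw [smul_smul, ← Real.exp_add]
    simp
  have step1 : ∫⁻ x, (ENNReal.ofReal |dil t f x|) ^ q ∂(gm n s)
      = ∫⁻ x, H (c • x) ∂volume := by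
    have e1 : ∫⁻ x, (ENNReal.ofReal |dil t f x|) ^ q ∂(gm n s)
        = ∫⁻ x, G (c • x) ∂(gm n s) := rfl
    have hGc : Measurable fun x => G (c • x) := by
      exact hGmeas.comp (measurable_const_smul c)
    rw [e1, gm, lintegral_withDensity_eq_lintegral_mul _ hρmeas hGc]
    refine lintegral_congr fun x => ?_
    simp only [hH, Pi.mul_apply]
    rw [hsmul x]
  have hmapvol : Measure.map (c • ·) (volume : Measure (EuclideanSpace ℝ (Fin n)))
      = ENNReal.ofReal |(c ^ Module.finrank ℝ (EuclideanSpace ℝ (Fin n)))⁻¹| • volume :=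
    Measure.map_addHaar_smul volume (ne_of_gt hcpos)
  have habs : |(c ^ Module.finrank ℝ (EuclideanSpace ℝ (Fin n)))⁻¹| = Real.exp (n * t) := by
    rw [finrank_euclideanSpace_fin, abs_of_pos (inv_pos.2 (pow_pos hcpos n)), hc,
      ← Real.exp_nat_mul, ← Real.exp_neg]
    congr 1
    ring
  have step2 : ∫⁻ x, H (c • x) ∂volume
      = ENNReal.ofReal (Real.exp (n * t)) * ∫⁻ y, H y ∂volume := by
    rw [← lintegral_map hHmeas (measurable_const_smul c), hmapvol, lintegral_smul_measure,
      habs, smul_eq_mul]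
  have step3 : ∫⁻ y, H y ∂volume
      ≤ ∫⁻ x, (ENNReal.ofReal |f x|) ^ q ∂(gm n s) := by
    rw [gm, lintegral_withDensity_eq_lintegral_mul _ hρmeas hGmeas]
    refine lintegral_mono fun y => ?_
    exact mul_le_mul_left (ENNReal.ofReal_le_ofReal (heatK_smul_le n hs ht0 y)) _
  calc ∫⁻ x, (ENNReal.ofReal |dil t f x|) ^ q ∂(gm n s)
      = ENNReal.ofReal (Real.exp (n * t)) * ∫⁻ y, H y ∂volume := by rw [step1, step2]
    _ ≤ ENNReal.ofReal (Real.exp (n * T)) * ∫⁻ x, (ENNReal.ofReal |f x|) ^ q ∂(gm n s) := by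
        apply mul_le_mul'
        · exact ENNReal.ofReal_le_ofReal (Real.exp_le_exp.2
            (mul_le_mul_of_nonneg_left htT (Nat.cast_nonneg n)))
        · exact step3

/-- Let `s > 0`, `p ≥ 1`, and `f ∈ L^{q₀}(μ_s)` for some `q₀ > p`.  Then there is `q > p`
such that for every `T < ∞`, `sup_{0 ≤ t ≤ T} ‖e^{−tE} f‖_{L^q(μ_s)} < ∞`.  In particular
the family `{e^{−tE} f : 0 ≤ t ≤ T}` is uniformly integrable with respect to `μ_s`. -/
theorem stmt_10 {n : ℕ} (hn : 1 ≤ n) (s p q₀ : ℝ) (hs : 0 < s) (hp : 1 ≤ p) (hq₀ : p < q₀)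
    (f : EuclideanSpace ℝ (Fin n) → ℝ) (hfmeas : Measurable f)
    (hf : MemLp f (ENNReal.ofReal q₀) (gm n s)) :
    (∃ q : ℝ, p < q ∧ ∀ T : ℝ, ∃ C : ENNReal, C < ⊤ ∧
      ∀ t ∈ Set.Icc (0 : ℝ) T, eLpNorm (dil t f) (ENNReal.ofReal q) (gm n s) ≤ C) ∧
    (∀ T : ℝ, ∀ ε > (0 : ℝ), ∃ M : ℝ, ∀ t ∈ Set.Icc (0 : ℝ) T,
      ∫ x in {x | M ≤ |dil t f x|}, |dil t f x| ∂(gm n s) ≤ ε) := by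
  have hq₀1 : 1 < q₀ := lt_of_le_of_lt hp hq₀
  have hq₀0 : 0 < q₀ := by linarith
  have hqne : ENNReal.ofReal q₀ ≠ 0 := by
    simp [ENNReal.ofReal_eq_zero]; linarith
  have hqtop : ENNReal.ofReal q₀ ≠ ⊤ := ENNReal.ofReal_ne_top
  have htoReal : (ENNReal.ofReal q₀).toReal = q₀ := ENNReal.toReal_ofReal hq₀0.le
  -- The basic finite quantity: `L = ∫ |f|^{q₀} dμ_s < ∞`.
  set L : ℝ≥0∞ := ∫⁻ x, (ENNReal.ofReal |f x|) ^ q₀ ∂(gm n s) with hL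
  have hLnorm : ∀ g : EuclideanSpace ℝ (Fin n) → ℝ,
      eLpNorm g (ENNReal.ofReal q₀) (gm n s)
        = (∫⁻ x, (ENNReal.ofReal |g x|) ^ q₀ ∂(gm n s)) ^ (1 / q₀) := by
    intro g
    rw [eLpNorm_eq_lintegral_rpow_enorm_toReal hqne hqtop, htoReal]
    congr 1
    refine lintegral_congr fun x => ?_
    congr 1
    rw [← ofReal_norm, Real.norm_eq_abs]
  have hLfin : L < ⊤ := by
    have h1 := hf.2
    rw [hLnorm f, ← hL] at h1
    by_contra hcon
    push_neg at hcon
    rw [top_le_iff] at hcon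
    rw [hcon, ENNReal.top_rpow_of_pos (by positivity)] at h1
    exact (lt_irrefl _ h1)
  -- Key bound for each T
  have key : ∀ T : ℝ, ∀ t ∈ Set.Icc (0 : ℝ) T,
      ∫⁻ x, (ENNReal.ofReal |dil t f x|) ^ q₀ ∂(gm n s)
        ≤ ENNReal.ofReal (Real.exp (n * T)) * L :=
    fun T t ht => dil_lintegral_le hs f hfmeas ht
  have hKfin : ∀ T : ℝ, ENNReal.ofReal (Real.exp (n * T)) * L < ⊤ :=
    fun T => ENNReal.mul_lt_top ENNReal.ofReal_lt_top hLfin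
  constructor
  · refine ⟨q₀, hq₀, fun T => ?_⟩
    refine ⟨(ENNReal.ofReal (Real.exp (n * T)) * L) ^ (1 / q₀), ?_, fun t ht => ?_⟩
    · exact ENNReal.rpow_lt_top_of_nonneg (by positivity) (hKfin T).ne
    · rw [hLnorm (dil t f)]
      exact ENNReal.rpow_le_rpow (key T t ht) (by positivity)
  · intro T ε hε
    set K : ℝ := (ENNReal.ofReal (Real.exp (n * T)) * L).toReal with hKdef
    have hK0 : 0 ≤ K := ENNReal.toReal_nonneg
    set M : ℝ := max 1 ((K / ε) ^ (q₀ - 1)⁻¹) with hM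
    have hM1 : 1 ≤ M := le_max_left _ _
    have hM0 : 0 < M := lt_of_lt_of_le one_pos hM1
    have hq₁ : 0 < q₀ - 1 := by linarith
    have hMpow : K / ε ≤ M ^ (q₀ - 1) := by
      calc K / ε = ((K / ε) ^ (q₀ - 1)⁻¹) ^ (q₀ - 1) :=
            (Real.rpow_inv_rpow (by positivity) hq₁.ne').symm
        _ ≤ M ^ (q₀ - 1) :=
            Real.rpow_le_rpow (Real.rpow_nonneg (by positivity) _) (le_max_right _ _) hq₁.le
    have hfinal : M ^ (1 - q₀) * K ≤ ε := by
      have h1 : K ≤ ε * M ^ (q₀ - 1) := by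
        rw [div_le_iff₀ hε] at hMpow
        linarith [hMpow]
      have h2 : M ^ (1 - q₀) = (M ^ (q₀ - 1))⁻¹ := by
        rw [← Real.rpow_neg hM0.le]; ring_nf
      have h3 : 0 < M ^ (q₀ - 1) := Real.rpow_pos_of_pos hM0 _
      rw [h2, inv_mul_le_iff₀ h3, mul_comm]
      exact h1
    refine ⟨M, fun t ht => ?_⟩
    set g : EuclideanSpace ℝ (Fin n) → ℝ := dil t f with hg
    have hgmeas : Measurable g := hfmeas.comp (measurable_const_smul _)
    set S : Set (EuclideanSpace ℝ (Fin n)) := {x | M ≤ |g x|} with hS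
    -- pointwise bound on S
    have hpt : ∀ x ∈ S, ENNReal.ofReal |g x|
        ≤ ENNReal.ofReal (M ^ (1 - q₀)) * (ENNReal.ofReal |g x|) ^ q₀ := by
      intro x hx
      have hgx : M ≤ |g x| := hx
      have hgx0 : 0 < |g x| := lt_of_lt_of_le hM0 hgx
      have hreal : |g x| ≤ M ^ (1 - q₀) * |g x| ^ q₀ := by
        have e1 : |g x| ^ q₀ = |g x| * |g x| ^ (q₀ - 1) := by
          rw [← Real.rpow_one_add' (abs_nonneg (g x)) (by linarith : (1:ℝ) + (q₀ - 1) ≠ 0)]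
          congr 1
          ring
        have e2 : M ^ (q₀ - 1) ≤ |g x| ^ (q₀ - 1) :=
          Real.rpow_le_rpow hM0.le hgx hq₁.le
        have e3 : M ^ (1 - q₀) * M ^ (q₀ - 1) = 1 := by
          rw [← Real.rpow_add hM0]; simp
        have hMq : 0 < M ^ (1 - q₀) := Real.rpow_pos_of_pos hM0 _
        calc |g x| = (M ^ (1 - q₀) * M ^ (q₀ - 1)) * |g x| := by rw [e3, one_mul]
          _ = M ^ (1 - q₀) * (|g x| * M ^ (q₀ - 1)) := by ring
          _ ≤ M ^ (1 - q₀) * (|g x| * |g x| ^ (q₀ - 1)) := by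
              refine mul_le_mul_of_nonneg_left ?_ hMq.le
              exact mul_le_mul_of_nonneg_left e2 hgx0.le
          _ = M ^ (1 - q₀) * |g x| ^ q₀ := by rw [← e1]
      calc ENNReal.ofReal |g x| ≤ ENNReal.ofReal (M ^ (1 - q₀) * |g x| ^ q₀) :=
            ENNReal.ofReal_le_ofReal hreal
        _ = ENNReal.ofReal (M ^ (1 - q₀)) * (ENNReal.ofReal |g x|) ^ q₀ := by
            rw [ENNReal.ofReal_mul (Real.rpow_nonneg hM0.le _),
              ENNReal.ofReal_rpow_of_nonneg (abs_nonneg _) hq₀0.le]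
    have hlin : ∫⁻ x in S, ENNReal.ofReal |g x| ∂(gm n s)
        ≤ ENNReal.ofReal (M ^ (1 - q₀)) * (ENNReal.ofReal (Real.exp (n * T)) * L) := by
      calc ∫⁻ x in S, ENNReal.ofReal |g x| ∂(gm n s)
          ≤ ∫⁻ x in S, ENNReal.ofReal (M ^ (1 - q₀)) * (ENNReal.ofReal |g x|) ^ q₀ ∂(gm n s) :=
            setLIntegral_mono (Measurable.const_mul
              ((ENNReal.continuous_rpow_const.measurable).comp hgmeas.abs.ennreal_ofReal) _) hpt
        _ ≤ ∫⁻ x, ENNReal.ofReal (M ^ (1 - q₀)) * (ENNReal.ofReal |g x|) ^ q₀ ∂(gm n s) :=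
            lintegral_mono' Measure.restrict_le_self le_rfl
        _ = ENNReal.ofReal (M ^ (1 - q₀)) * ∫⁻ x, (ENNReal.ofReal |g x|) ^ q₀ ∂(gm n s) :=
            lintegral_const_mul _
              ((ENNReal.continuous_rpow_const.measurable).comp hgmeas.abs.ennreal_ofReal)
        _ ≤ ENNReal.ofReal (M ^ (1 - q₀)) * (ENNReal.ofReal (Real.exp (n * T)) * L) :=
            mul_le_mul_right (key T t ht) _
    have hbound_fin : ENNReal.ofReal (M ^ (1 - q₀)) * (ENNReal.ofReal (Real.exp (n * T)) * L)
        ≠ ⊤ := (ENNReal.mul_lt_top ENNReal.ofReal_lt_top (hKfin T)).ne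
    have heq : ∫ x in S, |g x| ∂(gm n s)
        = (∫⁻ x in S, ENNReal.ofReal |g x| ∂(gm n s)).toReal := by
      rw [integral_eq_lintegral_of_nonneg_ae (Filter.Eventually.of_forall fun x => abs_nonneg _)
        (hgmeas.abs.aestronglyMeasurable)]
    rw [heq]
    calc (∫⁻ x in S, ENNReal.ofReal |g x| ∂(gm n s)).toReal
        ≤ (ENNReal.ofReal (M ^ (1 - q₀)) * (ENNReal.ofReal (Real.exp (n * T)) * L)).toReal :=
          ENNReal.toReal_mono hbound_fin hlin
      _ = M ^ (1 - q₀) * K := by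
          rw [ENNReal.toReal_mul, ENNReal.toReal_ofReal (Real.rpow_nonneg hM0.le _), hKdef]
      _ ≤ ε := hfinal
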